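/- For 0 < p < 1/2 and H(p) < e ≤ 1, the function D(x) = H(x*p) - (1-e)·H(x) - H(p) attains its maximum over [0,1] at x = 1/2, where D(1/2) = e - H(p) > 0. -/

import Mathlib

open Real Set

/-- Binary entropy function (base 2). -/
noncomputable def binH (t : ℝ) : ℝ := -(t * Real.logb 2 t) - (1 - t) * Real.logb 2 (1 - t)

/-- Binary convolution x*p = x(1-p)+p(1-x). -/
def bconv (x p : ℝ) : ℝ := x * (1 - p) + p * (1 - x)

/-- D(x) = H(x*p) - (1-e) H(x) - H(p). -/
noncomputable def Dfun (p e x : ℝ) : ℝ := binH (bconv x p) - (1 - e) * binH x - binH p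

/-!
Put `G z = 1 - H((1 - z) / 2)`, so that `1 - H(x) = G(1 - 2x)` and, because
`1 - 2(x*p) = (1 - 2x)(1 - 2p)`, `1 - H(x*p) = G((1 - 2x)(1 - 2p))`. Expanding
`(1 ± z) log (1 ± z)` gives `G z = ∑ cₙ z^(n+2)` with `cₙ ≥ 0` and `∑ cₙ ≤ G 1 = 1`. For
`a, b ∈ [0, 1)` the sequences `a^(n+2)` and `b^(n+2)` both decrease, so Chebyshev's sum inequality
with weights `cₙ` gives `G a * G b ≤ G (a b)`, i.e. `(1 - H x)(1 - H p) ≤ 1 - H(x*p)`. Hence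
`D(1/2) - D(x) = 1 - H(x*p) - (1 - e)(1 - H x) ≥ (1 - H x)(e - H p) ≥ 0`.
-/

open Filter Topology

section Chebyshev

open Finset

variable {ι R : Type*} [CommRing R] [LinearOrder R] [IsStrictOrderedRing R] {w f g : ι → R}

theorem Monovary.sum_mul_sum_le_sum_mul_sum_mul (hfg : Monovary f g) {s : Finset ι}
    (hw : ∀ i ∈ s, 0 ≤ w i) :
    (∑ i ∈ s, w i * f i) * ∑ i ∈ s, w i * g i ≤ (∑ i ∈ s, w i) * ∑ i ∈ s, w i * f i * g i := by
  have hsym : ∑ i ∈ s, ∑ j ∈ s, w i * w j * ((f j - f i) * (g j - g i)) =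
      2 * ((∑ i ∈ s, w i) * ∑ i ∈ s, w i * f i * g i -
        (∑ i ∈ s, w i * f i) * ∑ i ∈ s, w i * g i) := by
    have hexpand : ∀ i j, w i * w j * ((f j - f i) * (g j - g i)) =
        w i * (w j * f j * g j) + w i * f i * g i * w j - w i * g i * (w j * f j) -
          w i * f i * (w j * g j) := fun i j => by ring
    simp only [hexpand, sum_add_distrib, sum_sub_distrib, ← mul_sum, ← sum_mul]
    ring
  have hnonneg : 0 ≤ ∑ i ∈ s, ∑ j ∈ s, w i * w j * ((f j - f i) * (g j - g i)) :=
    sum_nonneg fun i hi => sum_nonneg fun j hj =>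
      mul_nonneg (mul_nonneg (hw i hi) (hw j hj)) (monovary_iff_forall_mul_nonneg.1 hfg i j)
  linarith

theorem Monovary.mul_le_mul_of_hasSum [TopologicalSpace R] [IsTopologicalRing R]
    [OrderClosedTopology R] (hfg : Monovary f g) (hw : 0 ≤ w) {W A B C : R} (hW : HasSum w W)
    (hA : HasSum (fun i => w i * f i) A) (hB : HasSum (fun i => w i * g i) B)
    (hC : HasSum (fun i => w i * f i * g i) C) : A * B ≤ W * C :=
  le_of_tendsto_of_tendsto' (Tendsto.mul hA hB) (Tendsto.mul hW hC) fun _ =>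
    hfg.sum_mul_sum_le_sum_mul_sum_mul fun i _ => hw i

end Chebyshev

lemma binH_eq_binEntropy_div (t : ℝ) : binH t = binEntropy t / log 2 := by
  simp only [binH, binEntropy, logb, log_inv]
  ring

lemma binH_le_one (t : ℝ) : binH t ≤ 1 := by
  rw [binH_eq_binEntropy_div, div_le_one (log_pos one_lt_two)]
  exact binEntropy_le_log_two

lemma binH_nonneg {t : ℝ} (ht : t ∈ Icc 0 1) : 0 ≤ binH t := by
  rw [binH_eq_binEntropy_div]
  exact div_nonneg (binEntropy_nonneg ht.1 ht.2) (log_pos one_lt_two).le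

lemma binH_half : binH (1 / 2) = 1 := by
  rw [binH_eq_binEntropy_div, one_div, binEntropy_two_inv, div_self (log_pos one_lt_two).ne']

lemma binH_zero : binH 0 = 0 := by simp [binH_eq_binEntropy_div]

noncomputable def entropyDefect (z : ℝ) : ℝ := 1 - binH ((1 - z) / 2)

noncomputable def entropyDefectCoeff (n : ℕ) : ℝ :=
  (1 + (-1) ^ n) / ((n + 1) * (n + 2)) / (2 * log 2)

lemma entropyDefect_nonneg (z : ℝ) : 0 ≤ entropyDefect z :=
  sub_nonneg.2 (binH_le_one _)

lemma entropyDefect_le_one {z : ℝ} (hz : z ∈ Icc (-1) 1) : entropyDefect z ≤ 1 :=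
  sub_le_self _ (binH_nonneg ⟨by linarith [hz.2], by linarith [hz.1]⟩)

lemma entropyDefect_one : entropyDefect 1 = 1 := by simp [entropyDefect, binH_zero]

lemma entropyDefect_abs (z : ℝ) : entropyDefect |z| = entropyDefect z := by
  rcases abs_choice z with h | h
  · rw [h]
  · rw [h, entropyDefect, entropyDefect, binH_eq_binEntropy_div, binH_eq_binEntropy_div,
      show (1 - -z) / 2 = 1 - (1 - z) / 2 by ring, binEntropy_one_sub]

lemma entropyDefect_eq_log {z : ℝ} (hz : |z| < 1) :
    entropyDefect z = ((1 + z) * log (1 + z) + (1 - z) * log (1 - z)) / (2 * log 2) := by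
  obtain ⟨hz₁, hz₂⟩ := abs_lt.1 hz
  have hlog2 : log 2 ≠ 0 := (log_pos one_lt_two).ne'
  simp only [entropyDefect, binH, logb, show 1 - (1 - z) / 2 = (1 + z) / 2 by ring,
    log_div (by linarith : 1 - z ≠ 0) two_ne_zero, log_div (by linarith : 1 + z ≠ 0) two_ne_zero]
  field_simp
  ring

lemma entropyDefectCoeff_nonneg (n : ℕ) : 0 ≤ entropyDefectCoeff n := by
  have : 0 ≤ 1 + (-1 : ℝ) ^ n := by rcases n.even_or_odd with h | h <;> simp [h.neg_one_pow]
  unfold entropyDefectCoeff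
  have := log_pos one_lt_two
  positivity

lemma hasSum_pow_add_two_div {w : ℝ} (hw : |w| < 1) :
    HasSum (fun n : ℕ => w ^ (n + 2) / ((n + 1) * (n + 2))) ((1 - w) * log (1 - w) + w) := by
  have hlog : HasSum (fun n : ℕ => w ^ (n + 1) / (n + 1)) (-log (1 - w)) :=
    hasSum_pow_div_log_of_abs_lt_one hw
  have hshift : HasSum (fun n : ℕ => w ^ (n + 2) / (n + 2)) (-log (1 - w) - w) := by
    rw [← hasSum_nat_add_iff' 1] at hlog
    simpa [add_assoc, one_add_one_eq_two] using hlog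
  rw [show (1 - w) * log (1 - w) + w = w * -log (1 - w) - (-log (1 - w) - w) by ring]
  refine ((hlog.mul_left w).sub hshift).congr_fun fun n => ?_
  field_simp
  ring

lemma hasSum_entropyDefect {z : ℝ} (hz : |z| < 1) :
    HasSum (fun n => entropyDefectCoeff n * z ^ (n + 2)) (entropyDefect z) := by
  have hneg := hasSum_pow_add_two_div (w := -z) (by rwa [abs_neg])
  rw [sub_neg_eq_add] at hneg
  rw [entropyDefect_eq_log hz,
    show (1 + z) * log (1 + z) + (1 - z) * log (1 - z) =
      (1 - z) * log (1 - z) + z + ((1 + z) * log (1 + z) + -z) by ring]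
  refine (((hasSum_pow_add_two_div hz).add hneg).div_const (2 * log 2)).congr_fun fun n => ?_
  rw [entropyDefectCoeff, neg_pow z, pow_add (-1 : ℝ), neg_one_sq]
  ring

lemma sum_range_entropyDefectCoeff_le_one (N : ℕ) :
    ∑ n ∈ Finset.range N, entropyDefectCoeff n ≤ 1 := by
  have hpoly : Tendsto (fun z => ∑ n ∈ Finset.range N, entropyDefectCoeff n * z ^ (n + 2))
      (𝓝[<] 1) (𝓝 (∑ n ∈ Finset.range N, entropyDefectCoeff n)) := by
    refine ((by fun_prop : Continuous fun z : ℝ =>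
      ∑ n ∈ Finset.range N, entropyDefectCoeff n * z ^ (n + 2)).tendsto' 1 _ ?_).mono_left
        nhdsWithin_le_nhds
    simp
  refine le_of_tendsto hpoly ?_
  filter_upwards [Ioo_mem_nhdsLT (show (0 : ℝ) < 1 from one_pos)] with z hz
  have hz' : |z| < 1 := by rw [abs_of_pos hz.1]; exact hz.2
  exact (sum_le_hasSum _ (fun n _ => mul_nonneg (entropyDefectCoeff_nonneg n)
    (pow_nonneg hz.1.le _)) (hasSum_entropyDefect hz')).trans
      (entropyDefect_le_one ⟨by linarith [hz.1], hz.2.le⟩)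

lemma summable_entropyDefectCoeff : Summable entropyDefectCoeff :=
  summable_of_sum_range_le entropyDefectCoeff_nonneg sum_range_entropyDefectCoeff_le_one

lemma tsum_entropyDefectCoeff_le_one : ∑' n, entropyDefectCoeff n ≤ 1 :=
  Real.tsum_le_of_sum_range_le entropyDefectCoeff_nonneg sum_range_entropyDefectCoeff_le_one

lemma entropyDefect_mul_le_of_lt_one {a b : ℝ} (ha : a ∈ Ico 0 1) (hb : b ∈ Ico 0 1) :
    entropyDefect a * entropyDefect b ≤ entropyDefect (a * b) := by
  have habs {z : ℝ} (hz : z ∈ Ico 0 1) : |z| < 1 := by rw [abs_of_nonneg hz.1]; exact hz.2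
  have hab : |a * b| < 1 := by
    rw [abs_mul]
    exact mul_lt_one_of_nonneg_of_lt_one_left (abs_nonneg a) (habs ha) (habs hb).le
  have hanti {z : ℝ} (hz : z ∈ Ico 0 1) : Antitone fun n : ℕ => z ^ (n + 2) :=
    fun m n hmn => pow_le_pow_of_le_one hz.1 hz.2.le (by omega)
  calc entropyDefect a * entropyDefect b
      ≤ (∑' n, entropyDefectCoeff n) * entropyDefect (a * b) :=
        ((hanti ha).monovary (hanti hb)).mul_le_mul_of_hasSum entropyDefectCoeff_nonneg
          summable_entropyDefectCoeff.hasSum (hasSum_entropyDefect (habs ha))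
          (hasSum_entropyDefect (habs hb))
          ((hasSum_entropyDefect hab).congr_fun fun n => by rw [mul_pow, mul_assoc])
    _ ≤ entropyDefect (a * b) :=
        mul_le_of_le_one_left (entropyDefect_nonneg _) tsum_entropyDefectCoeff_le_one

lemma entropyDefect_mul_le {a b : ℝ} (ha : a ∈ Icc (-1) 1) (hb : b ∈ Icc (-1) 1) :
    entropyDefect a * entropyDefect b ≤ entropyDefect (a * b) := by
  rw [← entropyDefect_abs a, ← entropyDefect_abs b, ← entropyDefect_abs (a * b), abs_mul]
  rcases (abs_le.2 ha).eq_or_lt with ha1 | ha1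
  · rw [ha1, entropyDefect_one, one_mul, one_mul]
  rcases (abs_le.2 hb).eq_or_lt with hb1 | hb1
  · rw [hb1, entropyDefect_one, mul_one, mul_one]
  exact entropyDefect_mul_le_of_lt_one ⟨abs_nonneg a, ha1⟩ ⟨abs_nonneg b, hb1⟩

lemma one_sub_binH (x : ℝ) : 1 - binH x = entropyDefect (1 - 2 * x) := by
  rw [entropyDefect, show (1 - (1 - 2 * x)) / 2 = x by ring]

theorem one_sub_binH_mul_le_one_sub_binH_bconv {x p : ℝ} (hx : x ∈ Icc 0 1) (hp : p ∈ Icc 0 1) :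
    (1 - binH x) * (1 - binH p) ≤ 1 - binH (bconv x p) := by
  rw [one_sub_binH, one_sub_binH, one_sub_binH,
    show 1 - 2 * bconv x p = (1 - 2 * x) * (1 - 2 * p) by unfold bconv; ring]
  exact entropyDefect_mul_le ⟨by linarith [hx.2], by linarith [hx.1]⟩
    ⟨by linarith [hp.2], by linarith [hp.1]⟩

lemma Dfun_half (p e : ℝ) : Dfun p e (1 / 2) = e - binH p := by
  rw [Dfun, show bconv (1 / 2) p = 1 / 2 by unfold bconv; ring, binH_half]
  ring

lemma Dfun_le_Dfun_half {p e x : ℝ} (hp : p ∈ Icc 0 1) (he : binH p ≤ e) (hx : x ∈ Icc 0 1) :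
    Dfun p e x ≤ Dfun p e (1 / 2) := by
  have hmul := one_sub_binH_mul_le_one_sub_binH_bconv hx hp
  have hgap : 0 ≤ (1 - binH x) * (e - binH p) :=
    mul_nonneg (sub_nonneg.2 (binH_le_one x)) (sub_nonneg.2 he)
  rw [Dfun_half, Dfun]
  linarith

theorem stmt6_general (p e : ℝ) (hp0 : 0 < p) (hp1 : p < 1 / 2) (he0 : binH p < e) :
    (∀ x ∈ Set.Icc (0 : ℝ) 1, Dfun p e x ≤ Dfun p e (1 / 2)) ∧
      Dfun p e (1 / 2) = e - binH p ∧ 0 < e - binH p :=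
  ⟨fun _ hx => Dfun_le_Dfun_half ⟨hp0.le, by linarith⟩ he0.le hx, Dfun_half p e, sub_pos.2 he0⟩

/-- When H(p) < e ≤ 1, D attains its maximum over [0,1] at x = 1/2,
where D(1/2) = e - H(p) > 0. -/
theorem stmt6 (p e : ℝ) (hp0 : 0 < p) (hp1 : p < 1 / 2) (he0 : binH p < e) (he1 : e ≤ 1) :
    (∀ x ∈ Set.Icc (0 : ℝ) 1, Dfun p e x ≤ Dfun p e (1 / 2)) ∧
      Dfun p e (1 / 2) = e - binH p ∧ 0 < e - binH p :=
  stmt6_general p e hp0 hp1 he0
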